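/- arXiv:2111.08838 — 2 statements merged into one kernel-verified Lean document; each statement's English description precedes it below -/
import Mathlib

section
/- Let n be an even positive integer and m ≥ 1 an integer. Then the corona graph P_n ∘ P_m admits an edge labeling f* : E(P_n ∘ P_m) → {0,1} whose induced vertex labeling f satisfies e_f(0) = n·m − 1, e_f(1) = n·m, and v_f(0) = v_f(1) = (n + n·m)/2. In particular |(v_f(0) + e_f(0)) − (v_f(1) + e_f(1))| ≤ 1, so P_n ∘ P_m is total edge product cordial for even n. -/
open scoped Classical
open Finset SimpleGraph

/-- Adjacency relation of the corona product `G ∘ H`: take one copy of `G` and,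
for each vertex `i` of `G`, a copy of `H` (indexed by `i`), joining `i` to every
vertex of its copy of `H`. -/
def coronaAdj {α β : Type*} (G : SimpleGraph α) (H : SimpleGraph β) :
    α ⊕ α × β → α ⊕ α × β → Prop
  | Sum.inl u, Sum.inl v => G.Adj u v
  | Sum.inl u, Sum.inr (i, _) => u = i
  | Sum.inr (i, _), Sum.inl u => u = i
  | Sum.inr (i, x), Sum.inr (j, y) => i = j ∧ H.Adj x y

/-- The corona product `G ∘ H` of two simple graphs. -/
def corona {α β : Type*} (G : SimpleGraph α) (H : SimpleGraph β) :
    SimpleGraph (α ⊕ α × β) where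
  Adj := coronaAdj G H
  symm := by
    constructor
    rintro (u | ⟨i, x⟩) (v | ⟨j, y⟩) h <;>
      simp only [coronaAdj] at h ⊢
    · exact h.symm
    · exact h
    · exact h
    · exact ⟨h.1.symm, h.2.symm⟩
  loopless := by
    constructor
    rintro (u | ⟨i, x⟩) h <;> simp only [coronaAdj] at h
    · exact G.loopless.irrefl u h
    · exact H.loopless.irrefl x h.2

/-- The vertex labeling induced by an edge labeling `f`: the label of `v` is the
product of the labels of the edges incident to `v` (an empty product is `1`). -/
noncomputable def inducedLabel {α : Type*} [Fintype α] (G : SimpleGraph α)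
    (f : Sym2 α → ℕ) (v : α) : ℕ :=
  ∏ u ∈ Finset.univ.filter (fun u => G.Adj v u), f s(v, u)

/-- `eCount G f i` is the number of edges of `G` labeled `i` by `f`. -/
noncomputable def eCount {α : Type*} [Fintype α] (G : SimpleGraph α)
    (f : Sym2 α → ℕ) (i : ℕ) : ℕ :=
  (G.edgeFinset.filter (fun e => f e = i)).card

/-- `vCount G f i` is the number of vertices of `G` whose induced label is `i`. -/
noncomputable def vCount {α : Type*} [Fintype α] (G : SimpleGraph α)
    (f : Sym2 α → ℕ) (i : ℕ) : ℕ :=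
  (Finset.univ.filter (fun v => inducedLabel G f v = i)).card

/-- `f` is a total edge product cordial labeling of `G`: it labels every edge `0` or `1`,
and `|(v_f(0) + e_f(0)) - (v_f(1) + e_f(1))| ≤ 1`. -/
def IsTotalEdgeProductCordialLabeling {α : Type*} [Fintype α] (G : SimpleGraph α)
    (f : Sym2 α → ℕ) : Prop :=
  (∀ e ∈ G.edgeSet, f e = 0 ∨ f e = 1) ∧
  |((vCount G f 0 : ℤ) + (eCount G f 0 : ℤ)) - ((vCount G f 1 : ℤ) + (eCount G f 1 : ℤ))| ≤ 1

/-- `G` is total edge product cordial if it admits a total edge product cordial labeling. -/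
def IsTotalEdgeProductCordial {α : Type*} [Fintype α] (G : SimpleGraph α) : Prop :=
  ∃ f : Sym2 α → ℕ, IsTotalEdgeProductCordialLabeling G f

/-!
Write `n = 2k`. Label a vertex `1` when it is one of the first `k` vertices of `P_n` or lies in
the copy of `P_m` attached to one of them, and label an edge `1` when it meets such a vertex.
Every vertex labelled `0` has a neighbour labelled `0` (its pendant copy, resp. its base vertex),
so the induced vertex labeling is this vertex labeling again, and `v_f(0) = v_f(1) = k(m + 1)`.
The edges of `P_n ∘ P_m` are the `n - 1` path edges, the `nm` spokes and the `n(m - 1)` edges of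
the copies; a spoke or copy edge is labelled `1` iff its base vertex is among the first `k`, and
a path edge `{i, i + 1}` iff `i < k`. Hence `e_f(1) = k + k(2m - 1) = nm` and
`e_f(0) = (k - 1) + k(2m - 1) = nm - 1`.
-/

section MeetLabel

variable {V : Type*}

noncomputable def meetLabel (S : Finset V) (e : Sym2 V) : ℕ :=
  if ∃ v ∈ e, v ∈ S then 1 else 0

lemma meetLabel_eq_zero_or_one (S : Finset V) (e : Sym2 V) :
    meetLabel S e = 0 ∨ meetLabel S e = 1 := by
  unfold meetLabel
  split_ifs <;> simp

variable [Fintype V] {G : SimpleGraph V} {S : Finset V}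

lemma inducedLabel_meetLabel (hS : ∀ v ∉ S, ∃ w ∉ S, G.Adj v w) (v : V) :
    inducedLabel G (meetLabel S) v = if v ∈ S then 1 else 0 := by
  unfold inducedLabel
  split_ifs with hv
  · exact prod_eq_one fun w _ => if_pos ⟨v, Sym2.mem_mk_left v w, hv⟩
  · obtain ⟨w, hw, hvw⟩ := hS v hv
    refine prod_eq_zero (i := w) (by simpa using hvw) (if_neg ?_)
    rintro ⟨x, hx, hxS⟩
    rcases Sym2.mem_iff.1 hx with rfl | rfl <;> contradiction

lemma vCount_meetLabel (hS : ∀ v ∉ S, ∃ w ∉ S, G.Adj v w) (i : ℕ) :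
    vCount G (meetLabel S) i = #{v | (if v ∈ S then 1 else 0) = i} := by
  simp only [vCount, inducedLabel_meetLabel hS]

end MeetLabel

section Corona

variable {α β : Type*} (G : SimpleGraph α) (H : SimpleGraph β)

@[simp] lemma corona_adj_inl_inl (u v : α) :
    (corona G H).Adj (Sum.inl u) (Sum.inl v) ↔ G.Adj u v := Iff.rfl

@[simp] lemma corona_adj_inl_inr (u : α) (p : α × β) :
    (corona G H).Adj (Sum.inl u) (Sum.inr p) ↔ u = p.1 := Iff.rfl

@[simp] lemma corona_adj_inr_inl (p : α × β) (u : α) :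
    (corona G H).Adj (Sum.inr p) (Sum.inl u) ↔ u = p.1 := Iff.rfl

@[simp] lemma corona_adj_inr_inr (p q : α × β) :
    (corona G H).Adj (Sum.inr p) (Sum.inr q) ↔ p.1 = q.1 ∧ H.Adj p.2 q.2 := Iff.rfl

def coronaSpoke (p : α × β) : Sym2 (α ⊕ α × β) :=
  s(Sum.inl p.1, Sum.inr p)

def coronaCopyEdge (q : α × Sym2 β) : Sym2 (α ⊕ α × β) :=
  q.2.map fun x => Sum.inr (q.1, x)

lemma coronaSpoke_injective : Function.Injective (coronaSpoke (α := α) (β := β)) := by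
  intro p q h
  simp only [coronaSpoke, Sym2.eq_iff, Sum.inl.injEq, Sum.inr.injEq, reduceCtorEq, and_false,
    or_false] at h
  exact h.2

lemma coronaCopyEdge_injective : Function.Injective (coronaCopyEdge (α := α) (β := β)) := by
  rintro ⟨i, e⟩ ⟨j, e'⟩ h
  induction e using Sym2.ind
  induction e' using Sym2.ind
  simp only [coronaCopyEdge, Sym2.map_mk, Sym2.eq_iff, Sum.inr.injEq, Prod.mk.injEq] at h
  aesop

variable [Fintype α] [Fintype β]

lemma edgeFinset_corona : (corona G H).edgeFinset =
    G.edgeFinset.map Function.Embedding.inl.sym2Map ∪ univ.image coronaSpoke ∪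
      (univ ×ˢ H.edgeFinset).image coronaCopyEdge := by
  ext e
  induction e using Sym2.ind with
  | _ a b =>
  rcases a with u | ⟨i, x⟩ <;> rcases b with v | ⟨j, y⟩ <;>
    simp [coronaSpoke, coronaCopyEdge, Sym2.exists, Sym2.map_mk] <;>
    grind [SimpleGraph.adj_comm]

lemma card_filter_edgeFinset_corona (P : Sym2 (α ⊕ α × β) → Prop) [DecidablePred P] :
    #{e ∈ (corona G H).edgeFinset | P e} =
      #{e ∈ G.edgeFinset | P (e.map Sum.inl)} + #{p : α × β | P (coronaSpoke p)} +
        #{q ∈ univ ×ˢ H.edgeFinset | P (coronaCopyEdge q)} := by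
  classical
  rw [edgeFinset_corona, filter_union, filter_union, card_union_of_disjoint,
    card_union_of_disjoint, filter_map, card_map, filter_image,
    card_image_of_injective _ coronaSpoke_injective, filter_image,
    card_image_of_injective _ coronaCopyEdge_injective]
  · rfl
  · refine disjoint_filter_filter (disjoint_left.2 ?_)
    simp only [mem_map, mem_image]
    rintro _ ⟨e, -, rfl⟩ ⟨p, -, h⟩
    induction e using Sym2.ind
    simp [coronaSpoke] at h
  · rw [← filter_union]
    refine disjoint_filter_filter (disjoint_left.2 ?_)
    simp only [mem_union, mem_map, mem_image]
    rintro _ (⟨e, -, rfl⟩ | ⟨p, -, rfl⟩) ⟨⟨i, e'⟩, -, h⟩ <;> induction e' using Sym2.ind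
    · induction e using Sym2.ind
      simp [coronaCopyEdge] at h
    · simp [coronaSpoke, coronaCopyEdge] at h

end Corona

section CoronaMeetLabel

variable {α β : Type*} [Fintype β] (A : Finset α)

lemma meetLabel_disjSum_map_inl (e : Sym2 α) :
    meetLabel (A.disjSum (A ×ˢ (univ : Finset β))) (e.map Sum.inl) = meetLabel A e := by
  induction e using Sym2.ind
  simp [meetLabel]

lemma meetLabel_disjSum_coronaSpoke [DecidableEq α] (p : α × β) :
    meetLabel (A.disjSum (A ×ˢ univ)) (coronaSpoke p) = if p.1 ∈ A then 1 else 0 := by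
  simp [meetLabel, coronaSpoke]

lemma meetLabel_disjSum_coronaCopyEdge [DecidableEq α] (q : α × Sym2 β) :
    meetLabel (A.disjSum (A ×ˢ univ)) (coronaCopyEdge q) = if q.1 ∈ A then 1 else 0 := by
  obtain ⟨a, e⟩ := q
  induction e using Sym2.ind
  simp [meetLabel, coronaCopyEdge]

variable [Fintype α] [DecidableEq α] (G : SimpleGraph α) (H : SimpleGraph β)

lemma eCount_corona_meetLabel (i : ℕ) :
    eCount (corona G H) (meetLabel (A.disjSum (A ×ˢ univ))) i =
      eCount G (meetLabel A) i +
        #{a | (if a ∈ A then 1 else 0) = i} * (Fintype.card β + #H.edgeFinset) := by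
  simp only [eCount, card_filter_edgeFinset_corona, meetLabel_disjSum_map_inl,
    meetLabel_disjSum_coronaSpoke, meetLabel_disjSum_coronaCopyEdge]
  rw [← univ_product_univ]
  simp only [filter_product_left (fun a => (if a ∈ A then 1 else 0) = i), card_product,
    card_univ]
  ring

lemma vCount_corona_meetLabel [Nonempty β] (i : ℕ) :
    vCount (corona G H) (meetLabel (A.disjSum (A ×ˢ univ))) i =
      #{a | (if a ∈ A then 1 else 0) = i} * (1 + Fintype.card β) := by
  have hS : ∀ v ∉ A.disjSum (A ×ˢ univ), ∃ w ∉ A.disjSum (A ×ˢ univ), (corona G H).Adj v w := by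
    rintro (a | ⟨a, x⟩) hv
    · exact ⟨Sum.inr (a, Classical.arbitrary β), by simpa using hv, rfl⟩
    · exact ⟨Sum.inl a, by simpa using hv, rfl⟩
  rw [vCount_meetLabel hS, card_filter, Fintype.sum_sum_type, Fintype.sum_prod_type, card_filter,
    mul_add, mul_one, sum_mul]
  simp only [inl_mem_disjSum, inr_mem_disjSum, mem_product, mem_univ, and_true, sum_const,
    card_univ, smul_eq_mul, mul_comm]

end CoronaMeetLabel

section PathGraph

lemma pathEdge_injective (N : ℕ) :
    Function.Injective fun j : Fin N => (s(j.castSucc, j.succ) : Sym2 (Fin (N + 1))) := by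
  intro j j' h
  simp only [Sym2.eq_iff, Fin.ext_iff, Fin.val_castSucc, Fin.val_succ] at h
  omega

lemma edgeFinset_pathGraph_succ (N : ℕ) :
    (pathGraph (N + 1)).edgeFinset = univ.map ⟨_, pathEdge_injective N⟩ := by
  ext e
  induction e using Sym2.ind with
  | _ a b =>
  simp only [mem_edgeFinset, mem_edgeSet, pathGraph_adj, mem_map, mem_univ, true_and,
    Function.Embedding.coeFn_mk, Sym2.eq_iff, Fin.ext_iff, Fin.val_castSucc, Fin.val_succ]
  constructor
  · rintro (h | h)
    · exact ⟨⟨a, by omega⟩, Or.inl ⟨rfl, h⟩⟩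
    · exact ⟨⟨b, by omega⟩, Or.inr ⟨rfl, h⟩⟩
  · rintro ⟨j, h | h⟩ <;> omega

lemma card_edgeFinset_pathGraph_succ (N : ℕ) : #(pathGraph (N + 1)).edgeFinset = N := by
  simp [edgeFinset_pathGraph_succ]

lemma eCount_pathGraph_meetLabel (N k i : ℕ) :
    eCount (pathGraph (N + 1)) (meetLabel {u | (u : ℕ) < k}) i =
      #{j : Fin N | (if (j : ℕ) < k then 1 else 0) = i} := by
  rw [eCount, edgeFinset_pathGraph_succ, filter_map, card_map]
  congr 1
  refine filter_congr fun j _ => ?_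
  have hmeet : (∃ u ∈ s(j.castSucc, j.succ), u ∈ ({u | (u : ℕ) < k} : Finset (Fin (N + 1)))) ↔
      (j : ℕ) < k := by
    simp only [Sym2.mem_iff, exists_eq_or_imp, exists_eq_left, mem_filter, mem_univ, true_and,
      Fin.val_castSucc, Fin.val_succ]
    omega
  simp only [Function.comp_apply, Function.Embedding.coeFn_mk, meetLabel, hmeet]

lemma card_filter_ite_val_lt_eq_one (n k : ℕ) :
    #{x : Fin n | (if (x : ℕ) < k then 1 else 0) = 1} = min n k := by
  simpa using Fin.card_filter_val_lt

lemma card_filter_ite_val_lt_eq_zero (n k : ℕ) :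
    #{x : Fin n | (if (x : ℕ) < k then 1 else 0) = 0} = n - min n k := by
  have := card_filter_add_card_filter_not (s := univ) fun x : Fin n => (x : ℕ) < k
  simp only [Fin.card_filter_val_lt, card_univ, Fintype.card_fin] at this
  simp only [ite_eq_right_iff, one_ne_zero, imp_false]
  omega

end PathGraph

/-- For even positive `n` and `m ≥ 1`, the corona graph `P_n ∘ P_m` admits an
edge labeling with `e_f(0) = nm - 1`, `e_f(1) = nm`, `v_f(0) = v_f(1) = (n + nm)/2`;
in particular it is total edge product cordial. -/
theorem corona_path_path_even_counts (n m : ℕ) (hn : 0 < n) (hne : Even n) (hm : 1 ≤ m) :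
    ∃ f : Sym2 (Fin n ⊕ Fin n × Fin m) → ℕ,
      (∀ e ∈ (corona (pathGraph n) (pathGraph m)).edgeSet, f e = 0 ∨ f e = 1) ∧
      eCount (corona (pathGraph n) (pathGraph m)) f 0 = n * m - 1 ∧
      eCount (corona (pathGraph n) (pathGraph m)) f 1 = n * m ∧
      vCount (corona (pathGraph n) (pathGraph m)) f 0 = (n + n * m) / 2 ∧
      vCount (corona (pathGraph n) (pathGraph m)) f 1 = (n + n * m) / 2 ∧
      |((vCount (corona (pathGraph n) (pathGraph m)) f 0 : ℤ) +
          (eCount (corona (pathGraph n) (pathGraph m)) f 0 : ℤ)) -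
        ((vCount (corona (pathGraph n) (pathGraph m)) f 1 : ℤ) +
          (eCount (corona (pathGraph n) (pathGraph m)) f 1 : ℤ))| ≤ 1 := by
  obtain ⟨j, rfl⟩ : ∃ j, n = 2 * j + 1 + 1 := by
    obtain ⟨k, hk⟩ := hne
    exact ⟨k - 1, by omega⟩
  obtain ⟨M, rfl⟩ : ∃ M, m = M + 1 := ⟨m - 1, by omega⟩
  set A : Finset (Fin (2 * j + 1 + 1)) := {u | (u : ℕ) < j + 1} with hA
  have hA1 : #{u | (if u ∈ A then 1 else 0) = 1} = j + 1 := by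
    simp only [hA, mem_filter, mem_univ, true_and, card_filter_ite_val_lt_eq_one]
    omega
  have hA0 : #{u | (if u ∈ A then 1 else 0) = 0} = j + 1 := by
    simp only [hA, mem_filter, mem_univ, true_and, card_filter_ite_val_lt_eq_zero]
    omega
  have hP1 : eCount (pathGraph (2 * j + 1 + 1)) (meetLabel A) 1 = j + 1 := by
    rw [eCount_pathGraph_meetLabel, card_filter_ite_val_lt_eq_one]
    omega
  have hP0 : eCount (pathGraph (2 * j + 1 + 1)) (meetLabel A) 0 = j := by
    rw [eCount_pathGraph_meetLabel, card_filter_ite_val_lt_eq_zero]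
    omega
  refine ⟨meetLabel (A.disjSum (A ×ˢ univ)), fun e _ => meetLabel_eq_zero_or_one _ e, ?_⟩
  simp only [vCount_corona_meetLabel, eCount_corona_meetLabel, hA0, hA1, hP0, hP1,
    Fintype.card_fin, card_edgeFinset_pathGraph_succ]
  have hE : (2 * j + 1 + 1) * (M + 1) = j + (j + 1) * (M + 1 + M) + 1 := by ring
  have hV : 2 * j + 1 + 1 + (2 * j + 1 + 1) * (M + 1) = 2 * ((j + 1) * (1 + (M + 1))) := by ring
  rw [hV, hE, Nat.mul_div_cancel_left _ two_pos]
  refine ⟨by omega, by omega, rfl, rfl, ?_⟩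
  push_cast
  ring_nf
  norm_num
end

section
/- For every integer m ≥ 3, the corona graph P_1 ∘ C_m (which is isomorphic to the wheel graph W_m, the join of the cycle C_m with a single vertex) is total edge product cordial. -/
open scoped Classical
open Finset SimpleGraph

/-! The edge labeling with zero set `Z ⊆ E(G)` gives label `0` exactly to the edges of `Z` and to
the vertices they touch, so it is total edge product cordial as soon as `2 (#Z + #V(Z))` is within
`1` of `|V| + |E|`. The wheel `P₁ ∘ C_m` has `m + 1` vertices and `2m` edges. Taking `k` of its
spokes as `Z` gives `2k + 1` zeros, and adding a rim edge between two of their rim endpoints gives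
one more, so every count from `5` to `2m + 2` is reached, in particular `⌊(3m + 1) / 2⌋`. -/

section Labeling

variable {V : Type*} [Fintype V] {G : SimpleGraph V} (Z : Finset (Sym2 V))

noncomputable def zeroOn : Sym2 V → ℕ := fun e => if e ∈ Z then 0 else 1

noncomputable def vertexSupport : Finset V := {v | ∃ e ∈ Z, v ∈ e}

variable {Z}

theorem inducedLabel_zeroOn_le_one (v : V) : inducedLabel G (zeroOn Z) v ≤ 1 :=
  prod_le_one (fun _ _ => Nat.zero_le _) fun _ _ => by unfold zeroOn; split_ifs <;> simp

theorem inducedLabel_zeroOn_eq_zero_iff (hZ : Z ⊆ G.edgeFinset) (v : V) :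
    inducedLabel G (zeroOn Z) v = 0 ↔ v ∈ vertexSupport Z := by
  simp only [inducedLabel, zeroOn, vertexSupport, prod_eq_zero_iff, mem_filter, mem_univ,
    true_and, ite_eq_left_iff, one_ne_zero, imp_false, not_not]
  constructor
  · rintro ⟨u, -, hu⟩
    exact ⟨_, hu, Sym2.mem_mk_left v u⟩
  · rintro ⟨e, he, hv⟩
    refine ⟨Sym2.Mem.other hv, ?_, by rwa [Sym2.other_spec]⟩
    rw [← mem_edgeSet, ← Sym2.other_spec hv] at *
    simpa using hZ he

theorem vCount_zeroOn_zero (hZ : Z ⊆ G.edgeFinset) :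
    vCount G (zeroOn Z) 0 = #(vertexSupport Z) := by
  simp only [vCount, inducedLabel_zeroOn_eq_zero_iff hZ, filter_mem_eq_inter, univ_inter]

theorem vCount_zeroOn_one (hZ : Z ⊆ G.edgeFinset) :
    vCount G (zeroOn Z) 1 = Fintype.card V - #(vertexSupport Z) := by
  have hone (v : V) : inducedLabel G (zeroOn Z) v = 1 ↔ ¬inducedLabel G (zeroOn Z) v = 0 := by
    have := inducedLabel_zeroOn_le_one (G := G) (Z := Z) v
    omega
  rw [← vCount_zeroOn_zero hZ, ← card_univ, ← card_filter_add_card_filter_not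
    (s := univ) (fun v => inducedLabel G (zeroOn Z) v = 0), vCount, vCount]
  simp only [hone, add_tsub_cancel_left]

theorem eCount_zeroOn_zero (hZ : Z ⊆ G.edgeFinset) : eCount G (zeroOn Z) 0 = #Z := by
  simp only [eCount, zeroOn, ite_eq_left_iff, one_ne_zero, imp_false, not_not,
    filter_mem_eq_inter, inter_eq_right.mpr hZ]

theorem eCount_zeroOn_one (hZ : Z ⊆ G.edgeFinset) :
    eCount G (zeroOn Z) 1 = #G.edgeFinset - #Z := by
  simp only [eCount, zeroOn, ite_eq_right_iff, zero_ne_one, imp_false, filter_notMem_eq_sdiff,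
    card_sdiff_of_subset hZ]

theorem isTotalEdgeProductCordial_of_zeroOn (hZ : Z ⊆ G.edgeFinset)
    (hlo : Fintype.card V + #G.edgeFinset ≤ 2 * (#Z + #(vertexSupport Z)) + 1)
    (hhi : 2 * (#Z + #(vertexSupport Z)) ≤ Fintype.card V + #G.edgeFinset + 1) :
    IsTotalEdgeProductCordial G := by
  refine ⟨zeroOn Z, fun e _ => by unfold zeroOn; split_ifs <;> simp, ?_⟩
  have := card_le_univ (vertexSupport Z)
  have := card_le_card hZ
  rw [vCount_zeroOn_zero hZ, vCount_zeroOn_one hZ, eCount_zeroOn_zero hZ, eCount_zeroOn_one hZ,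
    abs_le]
  constructor <;> push_cast [Nat.cast_sub ‹_›] <;> omega

theorem vertexSupport_insert [DecidableEq V] {e : Sym2 V} (he : ∀ v ∈ e, v ∈ vertexSupport Z) :
    vertexSupport (insert e Z) = vertexSupport Z := by
  ext v
  simp only [vertexSupport, mem_filter, mem_univ, true_and, mem_insert, exists_eq_or_imp,
    or_iff_right_iff_imp] at he ⊢
  exact he v

end Labeling

section Corona

variable {α β : Type*} [Fintype α] [Fintype β] (G : SimpleGraph α) (H : SimpleGraph β)

theorem corona_degree_inl (u : α) :
    (corona G H).degree (Sum.inl u) = G.degree u + Fintype.card β := by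
  simp only [← card_neighborFinset_eq_degree, neighborFinset_eq_filter, card_filter,
    Fintype.sum_sum_type, Fintype.sum_prod_type]
  congr 1
  rw [sum_eq_single u] <;> simp +contextual [corona, coronaAdj, eq_comm]

theorem corona_degree_inr (i : α) (x : β) :
    (corona G H).degree (Sum.inr (i, x)) = H.degree x + 1 := by
  simp only [← card_neighborFinset_eq_degree, neighborFinset_eq_filter, card_filter,
    Fintype.sum_sum_type, Fintype.sum_prod_type]
  rw [add_comm]
  congr 1
  · rw [sum_eq_single i] <;> simp +contextual [corona, coronaAdj, eq_comm]
  · rw [sum_eq_single i] <;> simp +contextual [corona, coronaAdj]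

theorem card_edgeFinset_corona :
    #(corona G H).edgeFinset =
      #G.edgeFinset + Fintype.card α * (#H.edgeFinset + Fintype.card β) := by
  have h := (corona G H).sum_degrees_eq_twice_card_edges
  simp only [Fintype.sum_sum_type, Fintype.sum_prod_type, corona_degree_inl, corona_degree_inr,
    sum_add_distrib, G.sum_degrees_eq_twice_card_edges, H.sum_degrees_eq_twice_card_edges,
    sum_const, card_univ, smul_eq_mul, mul_one] at h
  linarith

end Corona

theorem card_edgeFinset_pathGraph_one [Fintype (pathGraph 1).edgeSet] :
    #(pathGraph 1).edgeFinset = 0 := by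
  simp [Subsingleton.elim (pathGraph 1) ⊥]

theorem card_edgeFinset_cycleGraph (n : ℕ) [Fintype (cycleGraph (n + 3)).edgeSet] :
    #(cycleGraph (n + 3)).edgeFinset = n + 3 := by
  have h := (cycleGraph (n + 3)).sum_degrees_eq_twice_card_edges
  simp only [cycleGraph_degree_three_le, sum_const, card_univ, Fintype.card_fin, smul_eq_mul] at h
  have : 2 * #(cycleGraph (n + 3)).edgeFinset = (n + 3) * 2 := by convert h.symm
  omega

section Cone

variable {β : Type*} (S : Finset β)

noncomputable def spokes : Finset (Sym2 (Fin 1 ⊕ Fin 1 × β)) :=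
  S.image fun x => s(Sum.inl 0, Sum.inr (0, x))

theorem spokes_subset_edgeFinset [Fintype β] (H : SimpleGraph β) :
    spokes S ⊆ (corona (pathGraph 1) H).edgeFinset := by
  simp only [spokes, subset_iff, mem_image, mem_edgeFinset, forall_exists_index, and_imp]
  rintro _ x - rfl
  exact rfl

theorem card_spokes : #(spokes S) = #S :=
  card_image_of_injective _ fun x y h => by simpa using h

theorem vertexSupport_spokes [Fintype β] (hS : S.Nonempty) :
    vertexSupport (spokes S) = insert (Sum.inl 0) (S.image fun x => Sum.inr (0, x)) := by
  ext v
  simp only [vertexSupport, spokes, mem_image, exists_exists_and_eq_and, Sym2.mem_iff,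
    mem_filter, mem_univ, true_and, mem_insert]
  constructor
  · rintro ⟨a, ha, rfl | rfl⟩
    exacts [Or.inl rfl, Or.inr ⟨a, ha, rfl⟩]
  · obtain ⟨b, hb⟩ := hS
    rintro (rfl | ⟨a, ha, rfl⟩)
    exacts [⟨b, hb, Or.inl rfl⟩, ⟨a, ha, Or.inr rfl⟩]

theorem card_vertexSupport_spokes [Fintype β] (hS : S.Nonempty) :
    #(vertexSupport (spokes S)) = #S + 1 := by
  rw [vertexSupport_spokes S hS, card_insert_of_notMem (by simp),
    card_image_of_injective _ fun x y h => by simpa using h]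

end Cone

theorem exists_zeroSet_corona_pathGraph_one_cycleGraph (n z : ℕ) (hlo : 5 ≤ z)
    (hhi : z ≤ 2 * n + 8) :
    ∃ Z ⊆ (corona (pathGraph 1) (cycleGraph (n + 3))).edgeFinset,
      #Z + #(vertexSupport Z) = z := by
  set S : Finset (Fin (n + 3)) := {i | i.val < (z - 1) / 2}
  have hS : #S = (z - 1) / 2 := by
    simp only [S, Fin.card_filter_val_lt]
    omega
  have hS0 : 0 ∈ S := by simp only [S, mem_filter, mem_univ, true_and, Fin.val_zero]; omega
  have hS1 : 1 ∈ S := by simp only [S, mem_filter, mem_univ, true_and, Fin.val_one]; omega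
  have hsupp := card_vertexSupport_spokes S ⟨0, hS0⟩
  have hsub := spokes_subset_edgeFinset S (cycleGraph (n + 3))
  by_cases hz : z % 2 = 1
  · exact ⟨spokes S, hsub, by rw [card_spokes, hsupp]; omega⟩
  set e : Sym2 (Fin 1 ⊕ Fin 1 × Fin (n + 3)) := s(Sum.inr (0, 0), Sum.inr (0, 1))
  have he : e ∈ (corona (pathGraph 1) (cycleGraph (n + 3))).edgeFinset := by
    rw [mem_edgeFinset, mem_edgeSet]
    exact ⟨rfl, by simp [cycleGraph_adj]⟩
  refine ⟨insert e (spokes S), insert_subset he hsub, ?_⟩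
  rw [card_insert_of_notMem (by simp [e, spokes]), vertexSupport_insert, card_spokes, hsupp]
  · omega
  · simp only [e, Sym2.mem_iff, vertexSupport, spokes, mem_filter, mem_univ, true_and, mem_image]
    rintro v (rfl | rfl)
    exacts [⟨_, ⟨0, hS0, rfl⟩, Sym2.mem_mk_right _ _⟩, ⟨_, ⟨1, hS1, rfl⟩, Sym2.mem_mk_right _ _⟩]

/-- For every integer `m ≥ 3`, the corona graph `P_1 ∘ C_m` (the wheel graph
`W_m`) is total edge product cordial. -/
theorem corona_path_one_cycle_isTotalEdgeProductCordial (m : ℕ) (hm : 3 ≤ m) :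
    IsTotalEdgeProductCordial (corona (pathGraph 1) (cycleGraph m)) := by
  obtain ⟨n, rfl⟩ := Nat.exists_eq_add_of_le' hm
  obtain ⟨Z, hZ, hzeros⟩ :=
    exists_zeroSet_corona_pathGraph_one_cycleGraph n ((3 * n + 10) / 2) (by omega) (by omega)
  have hE := card_edgeFinset_corona (pathGraph 1) (cycleGraph (n + 3))
  rw [card_edgeFinset_pathGraph_one, card_edgeFinset_cycleGraph] at hE
  apply isTotalEdgeProductCordial_of_zeroOn hZ <;>
    simp only [hE, hzeros, Fintype.card_sum, Fintype.card_prod, Fintype.card_fin] <;> omega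
end
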